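/- Let G be an n-vertex graph such that α₁(G) + τ_B(G) > n²/4 while every proper induced subgraph H of G satisfies α₁(H) + τ_B(H) ≤ |V(H)|²/4 (i.e., G is a minimal counterexample to the conjecture α₁ + τ_B ≤ n²/4). If S is a nonempty proper subset of V(G) such that the induced subgraph G[S] has independence number t, then |[S, S̄]| > (|S| − 2t)(n − |S|). -/

import Mathlib

open Finset

/-- `A` is a triangle-independent set of edges of `G`: it consists of edges of `G`
and contains at most one edge from each triangle of `G`. -/
def TriIndep {V : Type*} (G : SimpleGraph V) (A : Finset (Sym2 V)) : Prop :=
  (A : Set (Sym2 V)) ⊆ G.edgeSet ∧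
    ∀ x y z : V, G.Adj x y → G.Adj y z → G.Adj x z →
      ¬(s(x, y) ∈ A ∧ s(y, z) ∈ A)

/-- `α₁ G`: the maximum size of a triangle-independent set of edges of `G`. -/
noncomputable def alpha1 {V : Type*} [Fintype V] (G : SimpleGraph V) : ℕ :=
  sSup {k | ∃ A : Finset (Sym2 V), TriIndep G A ∧ A.card = k}

/-- `τ G`: the minimum size of a set of edges whose deletion makes `G` triangle-free. -/
noncomputable def tau {V : Type*} [Fintype V] (G : SimpleGraph V) : ℕ :=
  sInf {k | ∃ X : Finset (Sym2 V), (X : Set (Sym2 V)) ⊆ G.edgeSet ∧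
    (G.deleteEdges (X : Set (Sym2 V))).CliqueFree 3 ∧ X.card = k}

/-- `τ_B G`: the minimum size of a set of edges whose deletion makes `G` bipartite. -/
noncomputable def tauB {V : Type*} [Fintype V] (G : SimpleGraph V) : ℕ :=
  sInf {k | ∃ X : Finset (Sym2 V), (X : Set (Sym2 V)) ⊆ G.edgeSet ∧
    (G.deleteEdges (X : Set (Sym2 V))).Colorable 2 ∧ X.card = k}

open scoped Classical in
/-- The edge cut `[S, S̄]`: the set of edges of `G` with one endpoint in `S`
and the other outside `S`. -/
noncomputable def edgeCut {V : Type*} [Fintype V] (G : SimpleGraph V) (S : Finset V) :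
    Finset (Sym2 V) :=
  G.edgeFinset.filter (fun e => ∃ x ∈ S, ∃ y ∉ S, e = s(x, y))

open scoped Classical in
/-- The number of edges of `G`. -/
noncomputable def edgeCount {V : Type*} [Fintype V] (G : SimpleGraph V) : ℕ :=
  G.edgeFinset.card

/-- The independence number of `G`. -/
noncomputable def indepNum {V : Type*} [Fintype V] (G : SimpleGraph V) : ℕ :=
  sSup {k | ∃ I : Finset V, (∀ x ∈ I, ∀ y ∈ I, ¬G.Adj x y) ∧ I.card = k}

/-- `K₄⁻`: the complete graph on 4 vertices with one edge deleted. -/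
def K4minus : SimpleGraph (Fin 4) := (SimpleGraph.completeGraph (Fin 4)).deleteEdges {s(0, 1)}

/-!
Split a maximum triangle-independent set `A` of `G` along the cut `[S, S̄]`. Its edges inside
`S` and inside `S̄` are triangle-independent in `G[S]` and `G[S̄]`; for `v ∉ S`, the vertices
`u ∈ S` with `uv ∈ A` are pairwise non-adjacent (two of them would span a triangle with two
edges of `A`), so there are at most `t` of them. Hence `α₁(G) ≤ α₁(G[S]) + α₁(G[S̄]) + t |S̄|`.
Gluing optimal 2-colourings of `G[S]` and `G[S̄]`, and flipping the second one if needed, leaves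
at most half of the cut monochromatic, so `2 τ_B(G) ≤ 2 τ_B(G[S]) + 2 τ_B(G[S̄]) + |[S, S̄]|`.
Minimality bounds `α₁ + τ_B` by `|S|²/4` on `G[S]` and by `|S̄|²/4` on `G[S̄]`; comparing with
`n²/4 = (|S| + |S̄|)²/4` gives `|[S, S̄]| > (|S| - 2t) |S̄|`.
-/

section
open scoped Classical

variable {V : Type*} {G : SimpleGraph V}

lemma card_le_card_filter_sym2_map_mem (S : Finset V) {E : Finset (Sym2 V)} (hE : E ⊆ S.sym2) :
    #E ≤ #{e : Sym2 (S : Set V) | e.map Subtype.val ∈ E} := by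
  calc #E ≤ #(({e : Sym2 (S : Set V) | e.map Subtype.val ∈ E} : Finset _).image
        (Sym2.map Subtype.val)) := by
        refine card_le_card fun e he => ?_
        have hS := mem_sym2_iff.mp (hE he)
        induction e using Sym2.ind with
        | _ a b =>
          refine mem_image.mpr ⟨s(⟨a, hS a (by simp)⟩, ⟨b, hS b (by simp)⟩), ?_, rfl⟩
          simpa using he
    _ ≤ _ := card_image_le

lemma mem_edgeSet_induce_of_map_mem {s : Set V} {e : Sym2 s}
    (he : e.map Subtype.val ∈ G.edgeSet) : e ∈ (G.induce s).edgeSet :=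
  (SimpleGraph.Embedding.induce s).map_mem_edgeSet_iff.mp he

lemma mem_edgeCut_of_adj [Fintype V] {S : Finset V} {a b : V} (hab : G.Adj a b) (ha : a ∈ S)
    (hb : b ∉ S) : s(a, b) ∈ edgeCut G S :=
  mem_filter.mpr ⟨SimpleGraph.mem_edgeFinset.mpr hab, a, ha, b, hb, rfl⟩

lemma mem_sym2_or_mem_sym2_compl_of_notMem_edgeCut [Fintype V] {S : Finset V} {e : Sym2 V}
    (he : e ∈ G.edgeSet) (hcut : e ∉ edgeCut G S) : e ∈ S.sym2 ∨ e ∈ Sᶜ.sym2 := by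
  induction e using Sym2.ind with
  | _ a b =>
    by_cases ha : a ∈ S <;> by_cases hb : b ∈ S
    · simp [ha, hb]
    · exact absurd (mem_edgeCut_of_adj he ha hb) hcut
    · exact absurd (Sym2.eq_swap ▸ mem_edgeCut_of_adj he.symm hb ha) hcut
    · simp [ha, hb]

lemma bddAbove_card_triIndep [Fintype V] (G : SimpleGraph V) :
    BddAbove {k | ∃ A : Finset (Sym2 V), TriIndep G A ∧ #A = k} := by
  refine ⟨Fintype.card (Sym2 V), ?_⟩
  rintro k ⟨A, -, rfl⟩
  exact card_le_univ A

lemma le_alpha1 [Fintype V] {A : Finset (Sym2 V)} (hA : TriIndep G A) : #A ≤ alpha1 G :=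
  le_csSup (bddAbove_card_triIndep G) ⟨A, hA, rfl⟩

lemma exists_triIndep_card_eq_alpha1 [Fintype V] (G : SimpleGraph V) :
    ∃ A : Finset (Sym2 V), TriIndep G A ∧ #A = alpha1 G := by
  have hempty : TriIndep G ∅ := ⟨by simp, by simp⟩
  exact Nat.sSup_mem (by exact ⟨0, ∅, hempty, rfl⟩) (bddAbove_card_triIndep G)

lemma TriIndep.not_adj {A : Finset (Sym2 V)} (hA : TriIndep G A) {u v w : V}
    (hu : s(u, v) ∈ A) (hw : s(w, v) ∈ A) : ¬G.Adj u w := fun huw =>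
  hA.2 u v w (hA.1 hu) (G.adj_symm (hA.1 hw)) huw ⟨hu, Sym2.eq_swap ▸ hw⟩

lemma TriIndep.card_inter_sym2_le_alpha1_induce {A : Finset (Sym2 V)} (hA : TriIndep G A)
    (S : Finset V) : #(A ∩ S.sym2) ≤ alpha1 (G.induce S) := by
  have hA' :
      TriIndep (G.induce S) {e : Sym2 (S : Set V) | e.map Subtype.val ∈ A ∩ S.sym2} := by
    constructor
    · intro e he
      exact mem_edgeSet_induce_of_map_mem (hA.1 (mem_inter.mp (mem_filter.mp he).2).1)
    · intro x y z hxy hyz hxz ⟨h₁, h₂⟩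
      simp only [mem_filter, mem_univ, true_and, mem_inter, Sym2.map_mk] at h₁ h₂
      exact hA.2 x y z hxy hyz hxz ⟨h₁.1, h₂.1⟩
  exact (card_le_card_filter_sym2_map_mem S inter_subset_right).trans (le_alpha1 hA')

lemma le_indepNum [Fintype V] {I : Finset V} (hI : ∀ x ∈ I, ∀ y ∈ I, ¬G.Adj x y) :
    #I ≤ indepNum G := by
  refine le_csSup ⟨Fintype.card V, ?_⟩ ⟨I, hI, rfl⟩
  rintro k ⟨J, -, rfl⟩
  exact card_le_univ J

lemma card_le_indepNum_induce {S I : Finset V} (hIS : I ⊆ S)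
    (hI : ∀ x ∈ I, ∀ y ∈ I, ¬G.Adj x y) : #I ≤ indepNum (G.induce S) := by
  calc #I = #(I.subtype (· ∈ (S : Set V))) := by
        rw [card_subtype, filter_true_of_mem fun x hx => mem_coe.mpr (hIS hx)]
    _ ≤ _ := le_indepNum fun x hx y hy => hI x (mem_subtype.mp hx) y (mem_subtype.mp hy)

lemma TriIndep.card_inter_edgeCut_le [Fintype V] {A : Finset (Sym2 V)} (hA : TriIndep G A)
    (S : Finset V) : #(A ∩ edgeCut G S) ≤ #Sᶜ * indepNum (G.induce S) := by
  have hcover : A ∩ edgeCut G S ⊆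
      Sᶜ.biUnion fun v => ({u ∈ S | s(u, v) ∈ A} : Finset V).image (s(·, v)) := by
    intro e he
    obtain ⟨heA, hecut⟩ := mem_inter.mp he
    obtain ⟨-, u, hu, v, hv, rfl⟩ := mem_filter.mp hecut
    exact mem_biUnion.mpr
      ⟨v, mem_compl.mpr hv, mem_image_of_mem _ (mem_filter.mpr ⟨hu, heA⟩)⟩
  refine (card_le_card hcover).trans (card_biUnion_le_card_mul _ _ _ fun v _ => ?_)
  refine card_image_le.trans (card_le_indepNum_induce (filter_subset _ _) ?_)
  intro u hu w hw
  exact hA.not_adj (mem_filter.mp hu).2 (mem_filter.mp hw).2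

theorem alpha1_le_alpha1_induce_add [Fintype V] (G : SimpleGraph V) (S : Finset V) :
    alpha1 G ≤ alpha1 (G.induce S) + alpha1 (G.induce (Sᶜ : Finset V)) +
      #Sᶜ * indepNum (G.induce S) := by
  obtain ⟨A, hA, hAcard⟩ := exists_triIndep_card_eq_alpha1 G
  have hcover : A ⊆ (A ∩ S.sym2 ∪ A ∩ Sᶜ.sym2) ∪ A ∩ edgeCut G S := by
    intro e he
    by_cases hcut : e ∈ edgeCut G S
    · exact mem_union_right _ (mem_inter.mpr ⟨he, hcut⟩)
    · rcases mem_sym2_or_mem_sym2_compl_of_notMem_edgeCut (hA.1 he) hcut with h | h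
      · exact mem_union_left _ (mem_union_left _ (mem_inter.mpr ⟨he, h⟩))
      · exact mem_union_left _ (mem_union_right _ (mem_inter.mpr ⟨he, h⟩))
  calc alpha1 G = #A := hAcard.symm
    _ ≤ _ := card_le_card hcover
    _ ≤ _ := (card_union_le _ _).trans (add_le_add_left (card_union_le _ _) _)
    _ ≤ _ := by
      gcongr
      · exact hA.card_inter_sym2_le_alpha1_induce S
      · exact hA.card_inter_sym2_le_alpha1_induce Sᶜ
      · exact hA.card_inter_edgeCut_le S

noncomputable def SimpleGraph.monochromaticEdges [Fintype V] (G : SimpleGraph V)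
    (c : V → Fin 2) : Finset (Sym2 V) :=
  {e ∈ G.edgeFinset | (e.map c).IsDiag}

lemma SimpleGraph.mem_monochromaticEdges [Fintype V] {c : V → Fin 2} {a b : V} :
    s(a, b) ∈ G.monochromaticEdges c ↔ G.Adj a b ∧ c a = c b := by
  simp [SimpleGraph.monochromaticEdges]

lemma SimpleGraph.monochromaticEdges_subset_edgeSet [Fintype V] (c : V → Fin 2) :
    (G.monochromaticEdges c : Set (Sym2 V)) ⊆ G.edgeSet :=
  fun _ he => SimpleGraph.mem_edgeFinset.mp (mem_filter.mp he).1

lemma SimpleGraph.colorable_deleteEdges_monochromaticEdges [Fintype V] (c : V → Fin 2) :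
    (G.deleteEdges (G.monochromaticEdges c)).Colorable 2 :=
  ⟨SimpleGraph.Coloring.mk c fun {a b} hab hc => by
    rw [SimpleGraph.deleteEdges_adj] at hab
    exact hab.2 (SimpleGraph.mem_monochromaticEdges.mpr ⟨hab.1, hc⟩)⟩

lemma tauB_le_card_monochromaticEdges [Fintype V] (c : V → Fin 2) :
    tauB G ≤ #(G.monochromaticEdges c) :=
  Nat.sInf_le ⟨_, G.monochromaticEdges_subset_edgeSet c,
    G.colorable_deleteEdges_monochromaticEdges c, rfl⟩

lemma exists_card_monochromaticEdges_le_tauB [Fintype V] (G : SimpleGraph V) :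
    ∃ c : V → Fin 2, #(G.monochromaticEdges c) ≤ tauB G := by
  have hmem : tauB G ∈ {k | ∃ X : Finset (Sym2 V), (X : Set (Sym2 V)) ⊆ G.edgeSet ∧
      (G.deleteEdges X).Colorable 2 ∧ #X = k} :=
    Nat.sInf_mem ⟨_, _, G.monochromaticEdges_subset_edgeSet 0,
      G.colorable_deleteEdges_monochromaticEdges 0, rfl⟩
  obtain ⟨X, -, ⟨col⟩, hX⟩ := hmem
  refine ⟨col, hX ▸ card_le_card fun e he => ?_⟩
  induction e using Sym2.ind with
  | _ a b =>
    obtain ⟨hab, hc⟩ := SimpleGraph.mem_monochromaticEdges.mp he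
    by_contra hX
    exact col.valid (SimpleGraph.deleteEdges_adj.mpr ⟨hab, hX⟩) hc

lemma card_monochromaticEdges_inter_sym2_le [Fintype V] (c : V → Fin 2) (S : Finset V) :
    #(G.monochromaticEdges c ∩ S.sym2) ≤
      #((G.induce S).monochromaticEdges (c ∘ Subtype.val)) := by
  refine (card_le_card_filter_sym2_map_mem S inter_subset_right).trans
    (card_le_card fun e he => ?_)
  have he' := (mem_inter.mp (mem_filter.mp he).2).1
  refine mem_filter.mpr ⟨SimpleGraph.mem_edgeFinset.mpr
    (mem_edgeSet_induce_of_map_mem (G.monochromaticEdges_subset_edgeSet c he')), ?_⟩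
  simpa [Sym2.map_map] using (mem_filter.mp he').2

/-- Flipping `c` outside `S` keeps the monochromatic edges off the cut and makes exactly the
other half of the cut monochromatic, so one of the two colourings sees at most half of the cut. -/
lemma two_mul_tauB_le_two_mul_card_monochromaticEdges_sdiff_add [Fintype V] (c : V → Fin 2)
    (S : Finset V) :
    2 * tauB G ≤ 2 * #(G.monochromaticEdges c \ edgeCut G S) + #(edgeCut G S) := by
  set c' : V → Fin 2 := fun v => if v ∈ S then c v else c v + 1
  have hcut :
      G.monochromaticEdges c' ∩ edgeCut G S = edgeCut G S \ G.monochromaticEdges c := by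
    ext e
    rw [mem_inter, mem_sdiff, and_comm, and_congr_right_iff]
    intro he
    obtain ⟨hxy, x, hx, y, hy, rfl⟩ := mem_filter.mp he
    have hflip : ∀ i j : Fin 2, i = j + 1 ↔ i ≠ j := by decide
    have hadj : G.Adj x y := SimpleGraph.mem_edgeFinset.mp hxy
    simp only [SimpleGraph.mem_monochromaticEdges, hadj, true_and, c', if_pos hx, if_neg hy, hflip]
  have hncut :
      G.monochromaticEdges c' \ edgeCut G S = G.monochromaticEdges c \ edgeCut G S := by
    ext e
    rw [mem_sdiff, mem_sdiff, and_congr_left_iff]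
    intro hcut
    induction e using Sym2.ind with
    | _ x y =>
      simp only [SimpleGraph.mem_monochromaticEdges, and_congr_right_iff]
      intro hxy
      rcases mem_sym2_or_mem_sym2_compl_of_notMem_edgeCut hxy hcut with h | h <;>
        simp only [mem_sym2_iff, Sym2.mem_iff, forall_eq_or_imp, forall_eq, mem_compl] at h <;>
        simp [c', h]
  have hτ := tauB_le_card_monochromaticEdges (G := G) c
  have hτ' := tauB_le_card_monochromaticEdges (G := G) c'
  rw [← card_sdiff_add_card_inter _ (edgeCut G S)] at hτ hτ'
  rw [hncut, hcut] at hτ'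
  have hsplit := card_sdiff_add_card_inter (edgeCut G S) (G.monochromaticEdges c)
  rw [inter_comm] at hsplit
  omega

theorem two_mul_tauB_le_tauB_induce_add [Fintype V] (G : SimpleGraph V) (S : Finset V) :
    2 * tauB G ≤ 2 * (tauB (G.induce S) + tauB (G.induce (Sᶜ : Finset V))) +
      #(edgeCut G S) := by
  obtain ⟨cS, hcS⟩ := exists_card_monochromaticEdges_le_tauB (G.induce S)
  obtain ⟨cT, hcT⟩ := exists_card_monochromaticEdges_le_tauB (G.induce (Sᶜ : Finset V))
  set c : V → Fin 2 := fun v => if h : v ∈ S then cS ⟨v, h⟩ else cT ⟨v, mem_compl.mpr h⟩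
  have hcS' : c ∘ Subtype.val = cS := funext fun v => dif_pos v.2
  have hcT' : c ∘ Subtype.val = cT := funext fun v => dif_neg (mem_compl.mp v.2)
  have hcover : G.monochromaticEdges c \ edgeCut G S ⊆
      G.monochromaticEdges c ∩ S.sym2 ∪ G.monochromaticEdges c ∩ Sᶜ.sym2 := by
    intro e he
    obtain ⟨hmono, hcut⟩ := mem_sdiff.mp he
    rcases mem_sym2_or_mem_sym2_compl_of_notMem_edgeCut
      (G.monochromaticEdges_subset_edgeSet c hmono) hcut with h | h
    · exact mem_union_left _ (mem_inter.mpr ⟨hmono, h⟩)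
    · exact mem_union_right _ (mem_inter.mpr ⟨hmono, h⟩)
  have hnoncut : #(G.monochromaticEdges c \ edgeCut G S) ≤
      tauB (G.induce S) + tauB (G.induce (Sᶜ : Finset V)) := by
    refine (card_le_card hcover).trans ((card_union_le _ _).trans (add_le_add ?_ ?_))
    · exact (card_monochromaticEdges_inter_sym2_le c S).trans (hcS' ▸ hcS)
    · exact (card_monochromaticEdges_inter_sym2_le c Sᶜ).trans (hcT' ▸ hcT)
  have := two_mul_tauB_le_two_mul_card_monochromaticEdges_sdiff_add (G := G) c S
  omega

end

/-- If `G` is a minimal counterexample to the conjecture `α₁ + τ_B ≤ n²/4` and `S` is a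
nonempty proper vertex subset such that `G[S]` has independence number `t`, then
`|[S, S̄]| > (|S| − 2t)(n − |S|)`. -/
theorem stmt9 {V : Type*} [Fintype V] (G : SimpleGraph V) (n : ℕ)
    (hn : Fintype.card V = n)
    (hctx : (alpha1 G + tauB G : ℝ) > n ^ 2 / 4)
    (hmin : ∀ S : Finset V, S ≠ Finset.univ →
      (alpha1 (G.induce (S : Set V)) + tauB (G.induce (S : Set V)) : ℝ) ≤
        (S.card : ℝ) ^ 2 / 4)
    (S : Finset V) (hS : S.Nonempty) (hSu : S ≠ Finset.univ)
    (t : ℕ) (ht : indepNum (G.induce (S : Set V)) = t) :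
    ((edgeCut G S).card : ℝ) > ((S.card : ℝ) - 2 * t) * ((n : ℝ) - S.card) := by
  classical
  have hSc : Sᶜ ≠ univ := by rwa [Ne, compl_eq_univ_iff, ← not_nonempty_iff_eq_empty, not_not]
  have hcard : (#S + #Sᶜ : ℝ) = n := by exact_mod_cast (card_add_card_compl S).trans hn
  have hα : (alpha1 G : ℝ) ≤
      alpha1 (G.induce S) + alpha1 (G.induce (Sᶜ : Finset V)) + #Sᶜ * t := by
    exact_mod_cast ht ▸ alpha1_le_alpha1_induce_add G S
  have hτ : (2 * tauB G : ℝ) ≤ 2 * (tauB (G.induce S) + tauB (G.induce (Sᶜ : Finset V))) +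
      #(edgeCut G S) := by
    exact_mod_cast two_mul_tauB_le_tauB_induce_add G S
  have hminS := hmin S hSu
  have hminSc := hmin Sᶜ hSc
  rw [← hcard] at hctx ⊢
  linarith
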